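/- For every λ ∈ ℝ, let μ_λ be the Lie bracket on ℝ^7 with nonzero basis brackets [e1,e2]=e4, [e1,e3]=e5, [e1,e6]=e7, [e2,e3]=e6, [e2,e5]=λe7, [e3,e4]=(λ-1)e7. Then μ_λ satisfies the Jacobi identity, φ = (1/2)·diag(1,1,1,2,2,2,3) is a derivation of (ℝ^7,μ_λ), and φ is pre-Einstein, i.e. trace(φ∘ψ) = trace(ψ) for every derivation ψ of (ℝ^7,μ_λ). -/

import Mathlib

open Finset

noncomputable section

/-- `ℝ⁷` with its standard basis and standard inner product. -/
abbrev V7 : Type := Fin 7 → ℝ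

/-- The standard basis vector `e i`. -/
def e (i : Fin 7) : V7 := Pi.single i 1

/-- The standard inner product on `ℝ⁷`. -/
def dot (x y : V7) : ℝ := ∑ i, x i * y i

/-- Structure constants built from a list of entries `(i, j, k, a)`, each meaning that
`μ (e i) (e j)` has component `a` along `e k` (and `μ (e j) (e i)` has component `-a`);
all unlisted basis brackets are `0`. -/
def toC (L : List (Fin 7 × Fin 7 × Fin 7 × ℝ)) (i j k : Fin 7) : ℝ :=
  (L.map fun t =>
      (if t.1 = i ∧ t.2.1 = j ∧ t.2.2.1 = k then t.2.2.2 else 0)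
    - (if t.1 = j ∧ t.2.1 = i ∧ t.2.2.1 = k then t.2.2.2 else 0)).sum

/-- The bilinear skew-symmetric map on `ℝ⁷` with structure constants `c`. -/
def br (c : Fin 7 → Fin 7 → Fin 7 → ℝ) (x y : V7) : V7 :=
  fun k => ∑ i, ∑ j, x i * y j * c i j k

lemma br_add_left (c : Fin 7 → Fin 7 → Fin 7 → ℝ) (x x' y : V7) :
    br c (x + x') y = br c x y + br c x' y := by
  funext k
  simp only [br, Pi.add_apply, ← Finset.sum_add_distrib]
  exact Finset.sum_congr rfl fun i _ => Finset.sum_congr rfl fun j _ => by ring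

lemma br_smul_left (c : Fin 7 → Fin 7 → Fin 7 → ℝ) (r : ℝ) (x y : V7) :
    br c (r • x) y = r • br c x y := by
  funext k
  simp only [br, Pi.smul_apply, smul_eq_mul, Finset.mul_sum]
  exact Finset.sum_congr rfl fun i _ => Finset.sum_congr rfl fun j _ => by ring

lemma br_add_right (c : Fin 7 → Fin 7 → Fin 7 → ℝ) (x y y' : V7) :
    br c x (y + y') = br c x y + br c x y' := by
  funext k
  simp only [br, Pi.add_apply, ← Finset.sum_add_distrib]
  exact Finset.sum_congr rfl fun i _ => Finset.sum_congr rfl fun j _ => by ring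

lemma br_smul_right (c : Fin 7 → Fin 7 → Fin 7 → ℝ) (r : ℝ) (x y : V7) :
    br c x (r • y) = r • br c x y := by
  funext k
  simp only [br, Pi.smul_apply, smul_eq_mul, Finset.mul_sum]
  exact Finset.sum_congr rfl fun i _ => Finset.sum_congr rfl fun j _ => by ring

lemma br_zero_left (c : Fin 7 → Fin 7 → Fin 7 → ℝ) (y : V7) : br c 0 y = 0 := by
  funext k; simp [br]

lemma br_zero_right (c : Fin 7 → Fin 7 → Fin 7 → ℝ) (x : V7) : br c x 0 = 0 := by
  funext k; simp [br]

/-- The space of derivations of the algebra `(ℝ⁷, br c)`, i.e. the linear maps `D` with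
`D (μ x y) = μ (D x) y + μ x (D y)` for all `x, y`, as a submodule of the endomorphisms. -/
def derivations (c : Fin 7 → Fin 7 → Fin 7 → ℝ) : Submodule ℝ (Module.End ℝ V7) where
  carrier := {D | ∀ x y, D (br c x y) = br c (D x) y + br c x (D y)}
  add_mem' := by
    intro D E hD hE x y
    simp only [LinearMap.add_apply, hD x y, hE x y, br_add_left, br_add_right]
    abel
  zero_mem' := by
    intro x y
    simp [br_zero_left, br_zero_right]
  smul_mem' := by
    intro r D hD x y
    simp only [LinearMap.smul_apply, hD x y, smul_add, br_smul_left, br_smul_right]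

/-- The Jacobi identity for the bracket `br c`. -/
def Jacobi (c : Fin 7 → Fin 7 → Fin 7 → ℝ) : Prop :=
  ∀ x y z : V7, br c (br c x y) z + br c (br c y z) x + br c (br c z x) y = 0

/-- Skew-symmetry of the bracket `br c`. -/
def Skew (c : Fin 7 → Fin 7 → Fin 7 → ℝ) : Prop :=
  ∀ x y : V7, br c x y = - br c y x

/-- The diagonal endomorphism `diag (a 1, …, a 7)` of `ℝ⁷`, `e i ↦ a i • e i`. -/
def diagL (a : Fin 7 → ℝ) : Module.End ℝ V7 :=
  LinearMap.pi fun i => a i • LinearMap.proj i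

/-- Structure constants of the bracket `μ_λ` with nonzero basis brackets
`[e1,e2]=e4, [e1,e3]=e5, [e1,e6]=e7, [e2,e3]=e6, [e2,e5]=λe7, [e3,e4]=(λ-1)e7`. -/
def c9 (lam : ℝ) : Fin 7 → Fin 7 → Fin 7 → ℝ :=
  toC [(0, 1, 3, (1:ℝ)),
   (0, 2, 4, 1),
   (0, 5, 6, 1),
   (1, 2, 5, 1),
   (1, 4, 6, lam),
   (2, 3, 6, lam - 1)]


/-!
Skew-symmetry is built into `toC`; the Jacobi identity is a direct computation.
The map `φ = ½ diag(1,1,1,2,2,2,3)` is a derivation because the weights are additive along every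
bracket: `[e_i, e_j]` has a component along `e_k` only when `w_k = w_i + w_j`.
For the pre-Einstein property write `d_i` for the diagonal entries of a derivation `ψ`. Since
`[e_2,e_3] = e_6` and `[e_1,e_6] = e_7`, and no other basis vectors contribute to these
components, `d_6 = d_2 + d_3` and `d_7 = d_1 + d_6`. Hence
`tr(φψ) - tr ψ = ½ (d_7 - d_1 - d_2 - d_3) = 0`.
-/

lemma toC_swap (L : List (Fin 7 × Fin 7 × Fin 7 × ℝ)) (i j k : Fin 7) :
    toC L j i k = -toC L i j k := by
  induction L with
  | nil => simp [toC]
  | cons t L ih =>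
    simp only [toC, List.map_cons, List.sum_cons] at ih ⊢
    rw [ih]
    ring

lemma skew_of_swap {c : Fin 7 → Fin 7 → Fin 7 → ℝ} (hc : ∀ i j k, c j i k = -c i j k) :
    Skew c := by
  intro x y
  funext k
  simp only [br, Pi.neg_apply, ← Finset.sum_neg_distrib]
  rw [Finset.sum_comm]
  exact Finset.sum_congr rfl fun i _ => Finset.sum_congr rfl fun j _ => by rw [hc]; ring

lemma skew_toC (L : List (Fin 7 × Fin 7 × Fin 7 × ℝ)) : Skew (toC L) :=
  skew_of_swap (toC_swap L)

lemma toC_eq_zero_of_not_additive (L : List (Fin 7 × Fin 7 × Fin 7 × ℝ)) (w : Fin 7 → ℝ)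
    (hL : ∀ t ∈ L, w t.2.2.1 = w t.1 + w t.2.1) {i j k : Fin 7} (hw : w k ≠ w i + w j) :
    toC L i j k = 0 := by
  refine List.sum_eq_zero fun r hr => ?_
  obtain ⟨t, ht, rfl⟩ := List.mem_map.mp hr
  have ht_additive := hL t ht
  rw [if_neg, if_neg, sub_zero]
  · rintro ⟨rfl, rfl, rfl⟩; exact hw (by rw [ht_additive, add_comm])
  · rintro ⟨rfl, rfl, rfl⟩; exact hw ht_additive

lemma diagL_apply (a : Fin 7 → ℝ) (x : V7) (i : Fin 7) : diagL a x i = a i * x i := rfl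

lemma diagL_mem_derivations {c : Fin 7 → Fin 7 → Fin 7 → ℝ} {a : Fin 7 → ℝ}
    (ha : ∀ i j k, c i j k ≠ 0 → a k = a i + a j) : diagL a ∈ derivations c := by
  intro x y
  funext k
  simp only [br, diagL_apply, Pi.add_apply, Finset.mul_sum, ← Finset.sum_add_distrib]
  refine Finset.sum_congr rfl fun i _ => Finset.sum_congr rfl fun j _ => ?_
  by_cases hc : c i j k = 0
  · simp [hc]
  · rw [ha i j k hc]; ring

lemma derivation_apply_diag {c : Fin 7 → Fin 7 → Fin 7 → ℝ} {D : Module.End ℝ V7}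
    (hD : D ∈ derivations c) {i j k : Fin 7} (hijk : br c (e i) (e j) = e k)
    (hleft : ∀ x, br c x (e j) k = x i) (hright : ∀ y, br c (e i) y k = y j) :
    D (e k) k = D (e i) i + D (e j) j := by
  have h : D (br c (e i) (e j)) = br c (D (e i)) (e j) + br c (e i) (D (e j)) := hD _ _
  rw [hijk] at h
  rw [h, Pi.add_apply, hleft, hright]

lemma trace_eq_sum_apply_e (θ : Module.End ℝ V7) : LinearMap.trace ℝ V7 θ = ∑ i, θ (e i) i := by
  conv_lhs => rw [← Matrix.toLin'_toMatrix' θ]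
  rw [Matrix.trace_toLin'_eq]
  rfl

lemma trace_diagL_comp (a : Fin 7 → ℝ) (ψ : Module.End ℝ V7) :
    LinearMap.trace ℝ V7 (diagL a ∘ₗ ψ) = ∑ i, a i * ψ (e i) i := by
  simp only [trace_eq_sum_apply_e, LinearMap.comp_apply, diagL_apply]

section Mu

variable (lam : ℝ)

/-- The bracket `μ_λ` in coordinates; the paper's `e_i` is `e (i - 1)` here. -/
def mu (x y : V7) : V7 :=
  ![0, 0, 0, x 0 * y 1 - x 1 * y 0, x 0 * y 2 - x 2 * y 0, x 1 * y 2 - x 2 * y 1,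
    x 0 * y 5 - x 5 * y 0 + lam * (x 1 * y 4 - x 4 * y 1) + (lam - 1) * (x 2 * y 3 - x 3 * y 2)]

lemma br_c9 (x y : V7) : br (c9 lam) x y = mu lam x y := by
  funext k
  fin_cases k <;> simp [br, c9, toC, mu, Fin.sum_univ_seven] <;> ring

lemma jacobi_c9 : Jacobi (c9 lam) := by
  intro x y z
  simp only [br_c9]
  funext k
  fin_cases k <;> simp [mu]; ring

lemma diagL_mem_derivations_c9 : diagL ![1, 1, 1, 2, 2, 2, 3] ∈ derivations (c9 lam) :=
  diagL_mem_derivations fun _ _ _ hc => by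
    by_contra hw
    exact hc (toC_eq_zero_of_not_additive _ _ (by simp [Matrix.cons_val]; norm_num) hw)

end Mu

/-- The bracket satisfies the Jacobi identity (and is skew-symmetric), `φ` is a derivation
of it, and `φ` is pre-Einstein: `trace (φ ∘ ψ) = trace ψ` for every derivation `ψ`. -/
theorem stmt (lam : ℝ) :
    Skew (c9 lam) ∧ Jacobi (c9 lam) ∧
    ((1/2 : ℝ) • diagL ![1, 1, 1, 2, 2, 2, 3]) ∈ derivations (c9 lam) ∧
    ∀ ψ ∈ derivations (c9 lam),
      LinearMap.trace ℝ V7 (((1/2 : ℝ) • diagL ![1, 1, 1, 2, 2, 2, 3]) ∘ₗ ψ) = LinearMap.trace ℝ V7 ψ := by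
  refine ⟨skew_toC _, jacobi_c9 lam,
    Submodule.smul_mem _ _ (diagL_mem_derivations_c9 lam), fun ψ hψ => ?_⟩
  have h5 : ψ (e 5) 5 = ψ (e 1) 1 + ψ (e 2) 2 :=
    derivation_apply_diag hψ (by funext k; fin_cases k <;> simp [br_c9, mu, e])
      (by simp [br_c9, mu, e]) (by simp [br_c9, mu, e])
  have h6 : ψ (e 6) 6 = ψ (e 0) 0 + ψ (e 5) 5 :=
    derivation_apply_diag hψ (by funext k; fin_cases k <;> simp [br_c9, mu, e])
      (by simp [br_c9, mu, e]) (by simp [br_c9, mu, e])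
  rw [LinearMap.smul_comp, map_smul, trace_diagL_comp, trace_eq_sum_apply_e]
  simp [Fin.sum_univ_seven, Matrix.cons_val]
  linear_combination (1/2 : ℝ) * h6 + (1/2 : ℝ) * h5
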